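/- Let n ≥ 3 be a natural number, let c, c' be integers with 0 < c ≤ c', and let A and B be finite sets of integers. The following are equivalent: (i) there exist nonempty finite sets of integers A_2, …, A_n with A_2 = A and A_n = B such that for every i with 2 ≤ i ≤ n−1 one has A_i = A_{i+1} ∪ {min A_i}, max A_i = max A_{i+1}, and c ≤ min A_{i+1} − min A_i ≤ c'; (ii) B is nonempty, A \ B is nonempty, B ⊆ A, the cardinality of A \ B equals n−2, max(A \ B) < min B, and for all integers y, z such that z is the successor of y in (A \ B) ∪ {min B}, one has c ≤ z − y ≤ c'. -/
import Mathlib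


/-- Minimum of a finite set of integers (default 0 on the empty set). -/
def zmin (A : Finset ℤ) : ℤ := if h : A.Nonempty then A.min' h else 0

/-- Maximum of a finite set of integers (default 0 on the empty set). -/
def zmax (A : Finset ℤ) : ℤ := if h : A.Nonempty then A.max' h else 0

/-- `z` is the successor of `y` in the finite set `A`. -/
def isSucc (A : Finset ℤ) (y z : ℤ) : Prop :=
  y ∈ A ∧ z ∈ A ∧ y < z ∧ ∀ w ∈ A, w ≤ y ∨ z ≤ w

lemma zmin_eq (A : Finset ℤ) (h : A.Nonempty) : zmin A = A.min' h := dif_pos h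
lemma zmax_eq (A : Finset ℤ) (h : A.Nonempty) : zmax A = A.max' h := dif_pos h
lemma zmin_mem (A : Finset ℤ) (h : A.Nonempty) : zmin A ∈ A := by
  rw [zmin_eq A h]; exact A.min'_mem h
lemma zmax_mem (A : Finset ℤ) (h : A.Nonempty) : zmax A ∈ A := by
  rw [zmax_eq A h]; exact A.max'_mem h
lemma zmin_le {A : Finset ℤ} {x : ℤ} (hx : x ∈ A) : zmin A ≤ x := by
  rw [zmin_eq A ⟨x, hx⟩]; exact Finset.min'_le A x hx
lemma le_zmax {A : Finset ℤ} {x : ℤ} (hx : x ∈ A) : x ≤ zmax A := by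
  rw [zmax_eq A ⟨x, hx⟩]; exact Finset.le_max' A x hx

theorem stmt_5 (n : ℕ) (hn : 3 ≤ n) (c c' : ℤ) (hc : 0 < c) (hcc' : c ≤ c')
    (A B : Finset ℤ) :
    (∃ F : ℕ → Finset ℤ, F 2 = A ∧ F n = B ∧
      (∀ i, 2 ≤ i → i ≤ n → (F i).Nonempty) ∧
      (∀ i, 2 ≤ i → i ≤ n - 1 →
        F i = F (i + 1) ∪ {zmin (F i)} ∧ zmax (F i) = zmax (F (i + 1)) ∧
        c ≤ zmin (F (i + 1)) - zmin (F i) ∧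
        zmin (F (i + 1)) - zmin (F i) ≤ c')) ↔
    (B.Nonempty ∧ (A \ B).Nonempty ∧ B ⊆ A ∧ (A \ B).card = n - 2 ∧
      zmax (A \ B) < zmin B ∧
      ∀ y z : ℤ, isSucc ((A \ B) ∪ {zmin B}) y z →
        c ≤ z - y ∧ z - y ≤ c') := by
  constructor
  · rintro ⟨F, hF2, hFn, hne, hstep⟩
    set m : ℕ → ℤ := fun i => zmin (F i) with hm
    have hmdef : ∀ i, zmin (F i) = m i := fun i => by rw [hm]
    have hBne : B.Nonempty := hFn ▸ hne n (by omega) le_rfl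
    have key : ∀ i, 2 ≤ i → i ≤ n - 1 → m i < m (i + 1) := by
      intro i h1 h2
      have h := (hstep i h1 h2).2.2.1
      simp only [hmdef] at h
      omega
    have hmono : ∀ i j, 2 ≤ i → i < j → j ≤ n → m i < m j := by
      intro i j h1 h2 h3
      induction j with
      | zero => omega
      | succ k ih =>
        rcases Nat.lt_or_ge i k with hik | hik
        · exact lt_trans (ih hik (by omega)) (key k (by omega) (by omega))
        · have hik' : i = k := by omega
          subst hik'
          exact key i h1 (by omega)
    have hdecomp : ∀ t, t ≤ n - 2 →
        F (n - t) = B ∪ (Finset.Icc (n - t) (n - 1)).image m := by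
      intro t
      induction t with
      | zero =>
        intro _
        rw [Nat.sub_zero, hFn, Finset.Icc_eq_empty (by omega), Finset.image_empty,
          Finset.union_empty]
      | succ t ih =>
        intro ht
        have h2le : 2 ≤ n - (t + 1) := by omega
        have hle : n - (t + 1) ≤ n - 1 := by omega
        have h1 := (hstep (n - (t + 1)) h2le hle).1
        have h2 : n - (t + 1) + 1 = n - t := by omega
        rw [h2] at h1
        rw [h1, ih (by omega)]
        have hins : Finset.Icc (n - (t + 1)) (n - 1) =
            insert (n - (t + 1)) (Finset.Icc (n - t) (n - 1)) := by
          ext x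
          simp only [Finset.mem_insert, Finset.mem_Icc]
          omega
        rw [hins, Finset.image_insert, hmdef]
        ext x
        simp only [Finset.mem_union, Finset.mem_insert, Finset.mem_singleton]
        tauto
    have hA : A = B ∪ (Finset.Icc 2 (n - 1)).image m := by
      have h := hdecomp (n - 2) le_rfl
      rw [show n - (n - 2) = 2 by omega] at h
      rw [← hF2, h]
    have hmn : m n = zmin B := by rw [← hmdef, hFn]
    have hABeq : A \ B = (Finset.Icc 2 (n - 1)).image m := by
      rw [hA]
      ext x
      simp only [Finset.mem_sdiff, Finset.mem_union]
      constructor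
      · rintro ⟨h1 | h1, h2⟩
        · exact absurd h1 h2
        · exact h1
      · intro hx
        refine ⟨Or.inr hx, fun hb => ?_⟩
        obtain ⟨j, hj, rfl⟩ := Finset.mem_image.mp hx
        rw [Finset.mem_Icc] at hj
        have h1 : m j < m n := hmono j n hj.1 (by omega) le_rfl
        have h2 : zmin B ≤ m j := zmin_le hb
        omega
    have hinj : Set.InjOn m (Finset.Icc 2 (n - 1)) := by
      intro a ha b hb hab
      simp only [Finset.coe_Icc, Set.mem_Icc] at ha hb
      by_contra hne'
      rcases Nat.lt_or_ge a b with h | h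
      · have := hmono a b ha.1 h (by omega); omega
      · have hba : b < a := by omega
        have := hmono b a hb.1 hba (by omega); omega
    refine ⟨hBne, ?_, ?_, ?_, ?_, ?_⟩
    · exact ⟨m 2, by
        rw [hABeq]
        exact Finset.mem_image_of_mem m (Finset.mem_Icc.mpr ⟨le_rfl, by omega⟩)⟩
    · rw [hA]; exact Finset.subset_union_left
    · rw [hABeq, Finset.card_image_of_injOn hinj, Nat.card_Icc]; omega
    · have hne' : ((Finset.Icc 2 (n - 1)).image m).Nonempty :=
        ⟨m 2, Finset.mem_image_of_mem m (Finset.mem_Icc.mpr ⟨le_rfl, by omega⟩)⟩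
      rw [hABeq]
      obtain ⟨j, hj, hjx⟩ := Finset.mem_image.mp (zmax_mem _ hne')
      rw [Finset.mem_Icc] at hj
      have h1 : m j < m n := hmono j n hj.1 (by omega) le_rfl
      omega
    · have hS : (A \ B) ∪ {zmin B} = (Finset.Icc 2 n).image m := by
        rw [hABeq, ← hmn]
        have hins : Finset.Icc 2 n = insert n (Finset.Icc 2 (n - 1)) := by
          ext x
          simp only [Finset.mem_insert, Finset.mem_Icc]
          omega
        rw [hins, Finset.image_insert]
        ext x
        simp only [Finset.mem_union, Finset.mem_insert, Finset.mem_singleton]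
        tauto
      intro y z hsucc
      rw [hS] at hsucc
      obtain ⟨hy, hz, hyz, hw⟩ := hsucc
      obtain ⟨j, hj, rfl⟩ := Finset.mem_image.mp hy
      obtain ⟨k, hk, rfl⟩ := Finset.mem_image.mp hz
      rw [Finset.mem_Icc] at hj hk
      have hjk : j < k := by
        by_contra h
        push_neg at h
        rcases Nat.lt_or_ge k j with h' | h'
        · have := hmono k j hk.1 h' (by omega); omega
        · have : j = k := by omega
          subst this
          omega
      have hj1 : j + 1 ≤ n := by omega
      have hw1 := hw (m (j + 1))
        (Finset.mem_image_of_mem m (Finset.mem_Icc.mpr ⟨by omega, hj1⟩))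
      have hlt : m j < m (j + 1) := key j hj.1 (by omega)
      have hle : m (j + 1) ≤ m k := by
        rcases Nat.lt_or_ge (j + 1) k with h | h
        · exact le_of_lt (hmono (j + 1) k (by omega) h hk.2)
        · have : j + 1 = k := by omega
          rw [this]
      have hzeq : m k = m (j + 1) := by omega
      have hb := (hstep j hj.1 (by omega)).2.2
      simp only [hmdef] at hb
      constructor <;> omega
  · rintro ⟨hB, hABne, hBA, hcard, hmax, hgap⟩
    have hminB : zmin B ∈ B := zmin_mem B hB
    set S := (A \ B) ∪ {zmin B} with hSdef
    have hSn : zmin B ∉ A \ B := fun h => (Finset.mem_sdiff.mp h).2 hminB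
    have hScard : S.card = n - 1 := by
      rw [hSdef, Finset.card_union_of_disjoint (Finset.disjoint_singleton_right.mpr hSn),
        hcard, Finset.card_singleton]
      omega
    set m : ℕ → ℤ := fun i =>
      if h : i - 2 < n - 1 then ((S.orderIsoOfFin hScard) ⟨i - 2, h⟩ : ℤ) else 0 with hm
    have hm_mem : ∀ i, 2 ≤ i → i ≤ n → m i ∈ S := by
      intro i h1 h2
      rw [hm]
      dsimp only
      rw [dif_pos (show i - 2 < n - 1 by omega)]
      exact ((S.orderIsoOfFin hScard) _).2
    have hm_lt : ∀ i j, 2 ≤ i → i ≤ n → 2 ≤ j → j ≤ n → i < j → m i < m j := by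
      intro i j h1 h2 h3 h4 h5
      rw [hm]
      dsimp only
      rw [dif_pos (show i - 2 < n - 1 by omega), dif_pos (show j - 2 < n - 1 by omega)]
      have hlt : (⟨i - 2, by omega⟩ : Fin (n - 1)) < ⟨j - 2, by omega⟩ := by
        simp only [Fin.mk_lt_mk]
        omega
      exact Subtype.coe_lt_coe.mpr ((S.orderIsoOfFin hScard).lt_iff_lt.mpr hlt)
    have hm_le : ∀ i j, 2 ≤ i → i ≤ n → 2 ≤ j → j ≤ n → i ≤ j → m i ≤ m j := by
      intro i j h1 h2 h3 h4 h5
      rcases Nat.eq_or_lt_of_le h5 with h | h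
      · rw [h]
      · exact le_of_lt (hm_lt i j h1 h2 h3 h4 h)
    have hm_surj : ∀ x ∈ S, ∃ j, 2 ≤ j ∧ j ≤ n ∧ m j = x := by
      intro x hx
      obtain ⟨a, ha⟩ := (S.orderIsoOfFin hScard).surjective ⟨x, hx⟩
      refine ⟨a.1 + 2, by omega, by have := a.2; omega, ?_⟩
      rw [hm]
      dsimp only
      rw [dif_pos (show a.1 + 2 - 2 < n - 1 by have := a.2; omega)]
      have heq : (⟨a.1 + 2 - 2, by have := a.2; omega⟩ : Fin (n - 1)) = a :=
        Fin.ext (by simp)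
      rw [heq, ha]
    have hlt_minB : ∀ x ∈ A \ B, x < zmin B := fun x hx =>
      lt_of_le_of_lt (le_zmax hx) hmax
    have hmn : m n = zmin B := by
      have h1 := hm_mem n (by omega) le_rfl
      rw [hSdef] at h1
      rcases Finset.mem_union.mp h1 with h | h
      · exfalso
        obtain ⟨j, hj1, hj2, hj3⟩ := hm_surj (zmin B)
          (Finset.mem_union_right _ (Finset.mem_singleton_self _))
        have hxn : m n < zmin B := hlt_minB _ h
        have hle : m j ≤ m n := hm_le j n hj1 hj2 (by omega) le_rfl hj2
        omega
      · exact Finset.mem_singleton.mp h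
    set F : ℕ → Finset ℤ := fun i => B ∪ S.filter (fun x => m i ≤ x) with hF
    have hFmem : ∀ i x, x ∈ F i ↔ x ∈ B ∨ (x ∈ S ∧ m i ≤ x) := by
      intro i x
      rw [hF]
      simp only [Finset.mem_union, Finset.mem_filter]
    have hBsubF : ∀ i, B ⊆ F i := fun i => Finset.subset_union_left
    have hFne : ∀ i, (F i).Nonempty := fun i => ⟨zmin B, hBsubF i hminB⟩
    have hFmin : ∀ i, 2 ≤ i → i ≤ n → zmin (F i) = m i := by
      intro i h1 h2
      rw [zmin_eq _ (hFne i)]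
      apply le_antisymm
      · exact Finset.min'_le _ _ ((hFmem i (m i)).mpr (Or.inr ⟨hm_mem i h1 h2, le_rfl⟩))
      · apply Finset.le_min'
        intro x hx
        rcases (hFmem i x).mp hx with h | ⟨_, h⟩
        · calc m i ≤ m n := hm_le i n h1 h2 (by omega) le_rfl h2
            _ = zmin B := hmn
            _ ≤ x := zmin_le h
        · exact h
    refine ⟨F, ?_, ?_, fun i _ _ => hFne i, ?_⟩
    · -- F 2 = A
      ext x
      rw [hFmem]
      constructor
      · rintro (h | ⟨hxS, _⟩)
        · exact hBA h
        · rcases Finset.mem_union.mp hxS with h | h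
          · exact (Finset.mem_sdiff.mp h).1
          · exact hBA ((Finset.mem_singleton.mp h) ▸ hminB)
      · intro hx
        by_cases hxB : x ∈ B
        · exact Or.inl hxB
        · have hxAB : x ∈ A \ B := Finset.mem_sdiff.mpr ⟨hx, hxB⟩
          have hxS : x ∈ S := Finset.mem_union_left _ hxAB
          refine Or.inr ⟨hxS, ?_⟩
          obtain ⟨j, hj1, hj2, rfl⟩ := hm_surj x hxS
          exact hm_le 2 j le_rfl (by omega) hj1 hj2 hj1
    · -- F n = B
      ext x
      rw [hFmem]
      constructor
      · rintro (h | ⟨hxS, hle⟩)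
        · exact h
        · rw [hmn] at hle
          rcases Finset.mem_union.mp hxS with h | h
          · exact absurd hle (not_le.mpr (hlt_minB x h))
          · exact (Finset.mem_singleton.mp h) ▸ hminB
      · exact fun h => Or.inl h
    · intro i h1 h2
      have hi1 : i + 1 ≤ n := by omega
      have hsucc : isSucc S (m i) (m (i + 1)) := by
        refine ⟨hm_mem i h1 (by omega), hm_mem (i + 1) (by omega) hi1,
          hm_lt i (i + 1) h1 (by omega) (by omega) hi1 (by omega), ?_⟩
        intro w hw
        obtain ⟨j, hj1, hj2, rfl⟩ := hm_surj w hw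
        rcases le_or_gt j i with h | h
        · exact Or.inl (hm_le j i hj1 hj2 h1 (by omega) h)
        · exact Or.inr (hm_le (i + 1) j (by omega) hi1 hj1 hj2 h)
      have hgap' := hgap (m i) (m (i + 1)) hsucc
      have hmaxF : ∀ k, zmax (F k) = zmax B := by
        intro k
        rw [zmax_eq _ (hFne k), zmax_eq _ hB]
        apply le_antisymm
        · apply Finset.max'_le
          intro x hx
          rcases (hFmem k x).mp hx with h | ⟨h, _⟩
          · exact Finset.le_max' _ _ h
          · have hmaxB : zmin B ≤ B.max' hB := zmin_le (B.max'_mem hB)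
            rcases Finset.mem_union.mp h with h' | h'
            · have := hlt_minB x h'; omega
            · rw [Finset.mem_singleton.mp h']; exact hmaxB
        · exact Finset.le_max' _ _ (hBsubF k (B.max'_mem hB))
      refine ⟨?_, by rw [hmaxF i, hmaxF (i + 1)], ?_, ?_⟩
      · rw [hFmin i h1 (by omega)]
        ext x
        simp only [Finset.mem_union, Finset.mem_singleton, hFmem]
        constructor
        · rintro (h | ⟨hxS, hle⟩)
          · exact Or.inl (Or.inl h)
          · obtain ⟨j, hj1, hj2, rfl⟩ := hm_surj x hxS
            have hij : i ≤ j := by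
              by_contra hh
              push_neg at hh
              have := hm_lt j i hj1 hj2 h1 (by omega) hh
              omega
            rcases Nat.eq_or_lt_of_le hij with heq | hlt'
            · exact Or.inr (by rw [heq])
            · exact Or.inl (Or.inr ⟨hm_mem j hj1 hj2,
                hm_le (i + 1) j (by omega) hi1 hj1 hj2 (by omega)⟩)
        · rintro ((h | ⟨hxS, hle⟩) | rfl)
          · exact Or.inl h
          · refine Or.inr ⟨hxS, ?_⟩
            have := hm_lt i (i + 1) h1 (by omega) (by omega) hi1 (by omega)
            omega
          · exact Or.inr ⟨hm_mem i h1 (by omega), le_rfl⟩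
      · rw [hFmin i h1 (by omega), hFmin (i + 1) (by omega) hi1]
        exact hgap'.1
      · rw [hFmin i h1 (by omega), hFmin (i + 1) (by omega) hi1]
        exact hgap'.2
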